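/- arXiv:2003.14267 — 3 statements merged into one kernel-verified Lean document; each statement's English description precedes it below -/
import Mathlib

section
/- Let f : ℝ → ℝ be a fourth-order polynomial with f(±1) = f'(±1) = 0, f''(±1) > 0, f even (f(s) = f(-s)), f > 0 on (-1,1), and f⁽⁴⁾ > 0. Then the ODE -θ₀'' + f'(θ₀) = 0 on ℝ with θ₀(0) = 0 and lim_{ρ→±∞} θ₀(ρ) = ±1 has a unique, strictly monotonically increasing solution θ₀ : ℝ → (-1,1). -/
open Real Filter Topology Polynomial

lemma quartic_form (f : ℝ → ℝ)
    (hpoly : ∃ p : Polynomial ℝ, p.natDegree = 4 ∧ ∀ x, f x = p.eval x)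
    (hf1 : f 1 = 0) (hfm1 : f (-1) = 0)
    (hf'1 : deriv f 1 = 0) (hf'm1 : deriv f (-1) = 0)
    (hpos : ∀ s ∈ Set.Ioo (-1 : ℝ) 1, 0 < f s) :
    ∃ a : ℝ, 0 < a ∧ f = fun x => a * (x ^ 2 - 1) ^ 2 := by
  obtain ⟨p, hdeg, hp⟩ := hpoly
  have hfe : f = fun x => p.eval x := funext hp
  subst hfe
  set a := p.coeff 4 with ha
  set q := p - Polynomial.C a * (Polynomial.X ^ 2 - 1) ^ 2 with hqdef
  have hD : ∀ x : ℝ, deriv (fun x => p.eval x) x = p.derivative.eval x :=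
    fun x => p.deriv
  rw [hD] at hf'1 hf'm1
  have hexp : ((Polynomial.X : ℝ[X]) ^ 2 - 1) ^ 2
      = Polynomial.X ^ 4 - Polynomial.C 2 * Polynomial.X ^ 2 + 1 := by
    rw [show (Polynomial.C (2:ℝ)) = (2:ℝ[X]) from map_ofNat _ 2]; ring
  have hq1 : q.eval 1 = 0 := by simp [hqdef, hf1]
  have hqm1 : q.eval (-1) = 0 := by simp [hqdef, hfm1]
  have hq'1 : q.derivative.eval 1 = 0 := by
    simp [hqdef, Polynomial.derivative_pow, hf'1]
  have hq'm1 : q.derivative.eval (-1) = 0 := by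
    simp [hqdef, Polynomial.derivative_pow, hf'm1]
  have hqd : q.natDegree ≤ 3 := by
    rw [Polynomial.natDegree_le_iff_coeff_eq_zero]
    intro N hN
    rw [hqdef, hexp]
    rcases eq_or_lt_of_le (show 4 ≤ N by omega) with h4 | h4
    · simp [Polynomial.coeff_sub, Polynomial.coeff_C_mul, ← h4, ha,
        Polynomial.coeff_X_pow, Polynomial.coeff_one]
    · have hpN : p.coeff N = 0 := Polynomial.coeff_eq_zero_of_natDegree_lt (hdeg ▸ h4)
      have h2 : ¬ N = 2 := by omega
      have h0 : ¬ N = 0 := by omega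
      have h44 : ¬ N = 4 := by omega
      simp [Polynomial.coeff_sub, Polynomial.coeff_C_mul, hpN,
        Polynomial.coeff_X_pow, Polynomial.coeff_one, h44, h2, h0]
  have hq0 : q = 0 := by
    by_contra hq0
    have hroot1 : 1 < q.rootMultiplicity 1 := by
      apply Polynomial.lt_rootMultiplicity_of_isRoot_iterate_derivative_of_mem_nonZeroDivisors' hq0
      · intro m hm
        interval_cases m
        · exact hq1
        · simpa using hq'1
      · intro m hm hm0
        interval_cases m
        · simp at hm0
        · simpa using one_mem (nonZeroDivisors ℝ)
    have hrootm1 : 1 < q.rootMultiplicity (-1) := by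
      apply Polynomial.lt_rootMultiplicity_of_isRoot_iterate_derivative_of_mem_nonZeroDivisors' hq0
      · intro m hm
        interval_cases m
        · exact hqm1
        · simpa using hq'm1
      · intro m hm hm0
        interval_cases m
        · simp at hm0
        · simpa using one_mem (nonZeroDivisors ℝ)
    have hdvd1 : (Polynomial.X - Polynomial.C (1:ℝ)) ^ 2 ∣ q :=
      dvd_trans (pow_dvd_pow _ hroot1) (q.pow_rootMultiplicity_dvd 1)
    have hdvdm1 : (Polynomial.X - Polynomial.C (-1:ℝ)) ^ 2 ∣ q :=
      dvd_trans (pow_dvd_pow _ hrootm1) (q.pow_rootMultiplicity_dvd (-1))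
    have hcop : IsCoprime (Polynomial.X - Polynomial.C (1:ℝ))
        (Polynomial.X - Polynomial.C (-1:ℝ)) :=
      Polynomial.isCoprime_X_sub_C_of_isUnit_sub (by norm_num)
    have hdvd : (Polynomial.X - Polynomial.C (1:ℝ)) ^ 2
        * (Polynomial.X - Polynomial.C (-1:ℝ)) ^ 2 ∣ q :=
      (hcop.pow).mul_dvd hdvd1 hdvdm1
    refine hq0 (Polynomial.eq_zero_of_dvd_of_natDegree_lt hdvd ?_)
    have : ((Polynomial.X - Polynomial.C (1:ℝ)) ^ 2
        * (Polynomial.X - Polynomial.C (-1:ℝ)) ^ 2).natDegree = 4 := by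
      rw [Polynomial.natDegree_mul (pow_ne_zero _ (Polynomial.X_sub_C_ne_zero _))
        (pow_ne_zero _ (Polynomial.X_sub_C_ne_zero _)),
        Polynomial.natDegree_pow, Polynomial.natDegree_pow,
        Polynomial.natDegree_X_sub_C, Polynomial.natDegree_X_sub_C]
    omega
  have hform : ∀ x : ℝ, p.eval x = a * (x ^ 2 - 1) ^ 2 := by
    intro x
    have := sub_eq_zero.mp hq0
    rw [this]
    simp
  have ha0 : 0 < a := by
    have := hpos 0 (by norm_num)
    simpa [hform 0] using this
  exact ⟨a, ha0, funext hform⟩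
open Real Filter Topology

lemma tanh_mem_Ioo (x : ℝ) : Real.tanh x ∈ Set.Ioo (-1 : ℝ) 1 := by
  rw [Real.tanh_eq_sinh_div_cosh]
  have hc := Real.cosh_pos x
  constructor
  · rw [lt_div_iff₀ hc]
    nlinarith [Real.cosh_add_sinh x, Real.exp_pos x]
  · rw [div_lt_one hc]
    nlinarith [Real.cosh_sub_sinh x, Real.exp_pos (-x)]

lemma hasDerivAt_tanh (x : ℝ) : HasDerivAt Real.tanh (1 - Real.tanh x ^ 2) x := by
  have hc := Real.cosh_pos x
  have h : HasDerivAt (fun y => Real.sinh y / Real.cosh y)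
      ((Real.cosh x * Real.cosh x - Real.sinh x * Real.sinh x) / Real.cosh x ^ 2) x :=
    (Real.hasDerivAt_sinh x).div (Real.hasDerivAt_cosh x) hc.ne'
  have he : (fun y => Real.sinh y / Real.cosh y) = Real.tanh := by
    funext y; rw [Real.tanh_eq_sinh_div_cosh]
  rw [he] at h
  convert h using 1
  rw [Real.tanh_eq_sinh_div_cosh]
  have h2 := Real.cosh_sq_sub_sinh_sq x
  field_simp

lemma contDiff_tanh : ContDiff ℝ (⊤ : ℕ∞) Real.tanh := by
  have he : Real.tanh = fun y => Real.sinh y / Real.cosh y := by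
    funext y; rw [Real.tanh_eq_sinh_div_cosh]
  rw [he]
  exact Real.contDiff_sinh.div Real.contDiff_cosh (fun x => (Real.cosh_pos x).ne')

lemma deriv_tanh : deriv Real.tanh = fun x => 1 - Real.tanh x ^ 2 :=
  funext fun x => (hasDerivAt_tanh x).deriv

lemma strictMono_tanh : StrictMono Real.tanh := by
  apply strictMono_of_deriv_pos
  intro x
  rw [deriv_tanh]
  have h := tanh_mem_Ioo x
  show 0 < 1 - Real.tanh x ^ 2
  nlinarith [h.1, h.2]

lemma tendsto_tanh_atTop : Tendsto Real.tanh atTop (𝓝 1) := by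
  have he : ∀ x : ℝ, Real.tanh x = (1 - Real.exp (-(2 * x))) / (1 + Real.exp (-(2 * x))) := by
    intro x
    rw [Real.tanh_eq_sinh_div_cosh, Real.sinh_eq, Real.cosh_eq]
    have h1 : Real.exp x ≠ 0 := (Real.exp_pos x).ne'
    rw [div_eq_div_iff (by positivity) (by positivity)]
    have e1 : Real.exp (-x) = Real.exp (-(2 * x)) * Real.exp x := by
      rw [← Real.exp_add]; ring_nf
    rw [e1]; ring
  rw [show Real.tanh = fun x => (1 - Real.exp (-(2*x))) / (1 + Real.exp (-(2*x))) from funext he]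
  have h2 : Tendsto (fun x : ℝ => 2 * x) atTop atTop :=
    Tendsto.const_mul_atTop two_pos tendsto_id
  have hexp : Tendsto (fun x : ℝ => Real.exp (-(2 * x))) atTop (𝓝 0) :=
    Real.tendsto_exp_atBot.comp (tendsto_neg_atTop_atBot.comp h2)
  have := ((tendsto_const_nhds (x := (1:ℝ))).sub hexp).div
    ((tendsto_const_nhds (x := (1:ℝ))).add hexp) (by norm_num : (1:ℝ) + 0 ≠ 0)
  simpa [Pi.div_def] using this

lemma tendsto_tanh_atBot : Tendsto Real.tanh atBot (𝓝 (-1)) := by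
  have h : Tendsto (fun x : ℝ => -Real.tanh (-x)) atBot (𝓝 (-1)) := by
    have := (tendsto_tanh_atTop.comp tendsto_neg_atBot_atTop).neg
    simpa using this
  have he : (fun x : ℝ => -Real.tanh (-x)) = Real.tanh := by
    funext x; rw [Real.tanh_neg, neg_neg]
  rwa [he] at h

lemma deriv_nonneg_of_monot {g : ℝ → ℝ} (hm : Monotone g) {d x : ℝ}
    (hd : HasDerivAt g d x) : 0 ≤ d := by
  have h : Tendsto (slope g x) (𝓝[>] x) (𝓝 d) :=
    (hasDerivAt_iff_tendsto_slope.mp hd).mono_left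
      (nhdsWithin_mono x (fun y hy => ne_of_gt hy))
  refine ge_of_tendsto h ?_
  filter_upwards [self_mem_nhdsWithin] with y hy
  rw [slope_def_field]
  exact div_nonneg (sub_nonneg.mpr (hm (le_of_lt hy))) (sub_nonneg.mpr (le_of_lt hy))

lemma clamp_eq {x : ℝ} (h1 : -1 ≤ x) (h2 : x ≤ 1) : max (-1 : ℝ) (min 1 x) = x := by
  rw [min_eq_right h2, max_eq_right h1]

lemma clamp_lip (k : ℝ) (hk : 0 ≤ k) :
    LipschitzWith ((2 * k).toNNReal)
      (fun x : ℝ => k * (1 - (max (-1 : ℝ) (min 1 x)) ^ 2)) := by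
  apply LipschitzWith.of_dist_le_mul
  intro x y
  rw [Real.dist_eq, Real.dist_eq, Real.coe_toNNReal _ (by positivity)]
  set cx := max (-1 : ℝ) (min 1 x) with hcx
  set cy := max (-1 : ℝ) (min 1 y) with hcy
  have hb : ∀ z : ℝ, -1 ≤ max (-1 : ℝ) (min 1 z) ∧ max (-1 : ℝ) (min 1 z) ≤ 1 :=
    fun z => ⟨le_max_left _ _, max_le (by norm_num) (min_le_left _ _)⟩
  have hdiff : |cx - cy| ≤ |x - y| := by
    calc |cx - cy| = |max (min 1 x) (-1 : ℝ) - max (min 1 y) (-1)| := by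
            rw [hcx, hcy, max_comm, max_comm (-1 : ℝ)]
      _ ≤ |min 1 x - min 1 y| := abs_max_sub_max_le_abs _ _ _
      _ = |min x 1 - min y 1| := by rw [min_comm, min_comm (1 : ℝ)]
      _ ≤ max |x - y| |(1:ℝ) - 1| := abs_min_sub_min_le_max _ _ _ _
      _ = |x - y| := by simp
  have heq : |k * (1 - cx ^ 2) - k * (1 - cy ^ 2)| = k * (|cx - cy| * |cx + cy|) := by
    have h : k * (1 - cx ^ 2) - k * (1 - cy ^ 2) = -(k * ((cx - cy) * (cx + cy))) := by
      ring
    rw [h, abs_neg, abs_mul, abs_mul, abs_of_nonneg hk]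
  rw [heq]
  have hsum : |cx + cy| ≤ 2 := by
    have h1 := hb x; have h2 := hb y
    rw [← hcx] at h1; rw [← hcy] at h2
    rw [abs_le]; constructor <;> [linarith [h1.1, h2.1]; linarith [h1.2, h2.2]]
  have habs : (0:ℝ) ≤ |cx - cy| := abs_nonneg _
  calc k * (|cx - cy| * |cx + cy|) ≤ k * (|x - y| * 2) := by
        apply mul_le_mul_of_nonneg_left _ hk
        nlinarith [abs_nonneg (x - y)]
    _ = 2 * k * |x - y| := by ring

theorem stmt_0 (f : ℝ → ℝ)
    (hpoly : ∃ p : Polynomial ℝ, p.natDegree = 4 ∧ ∀ x, f x = p.eval x)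
    (hf1 : f 1 = 0) (hfm1 : f (-1) = 0)
    (hf'1 : deriv f 1 = 0) (hf'm1 : deriv f (-1) = 0)
    (hf''1 : 0 < iteratedDeriv 2 f 1) (hf''m1 : 0 < iteratedDeriv 2 f (-1))
    (heven : ∀ s, f s = f (-s))
    (hpos : ∀ s ∈ Set.Ioo (-1 : ℝ) 1, 0 < f s)
    (hf4 : ∀ s, 0 < iteratedDeriv 4 f s) :
    ∃! θ₀ : ℝ → ℝ,
      ContDiff ℝ (⊤ : ℕ∞) θ₀ ∧ StrictMono θ₀ ∧
      (∀ ρ, θ₀ ρ ∈ Set.Ioo (-1 : ℝ) 1) ∧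
      (∀ ρ, -iteratedDeriv 2 θ₀ ρ + deriv f (θ₀ ρ) = 0) ∧
      θ₀ 0 = 0 ∧
      Tendsto θ₀ atTop (𝓝 1) ∧ Tendsto θ₀ atBot (𝓝 (-1)) := by
  obtain ⟨a, ha, hfe⟩ := quartic_form f hpoly hf1 hfm1 hf'1 hf'm1 hpos
  subst hfe
  set k := Real.sqrt (2 * a) with hk
  have hk0 : 0 < k := Real.sqrt_pos.mpr (by linarith)
  have hk2 : k ^ 2 = 2 * a := Real.sq_sqrt (by linarith)
  -- derivative of f
  have hfd : ∀ s : ℝ, HasDerivAt (fun x : ℝ => a * (x ^ 2 - 1) ^ 2)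
      (4 * a * s * (s ^ 2 - 1)) s := by
    intro s
    have h := (((hasDerivAt_pow 2 s).sub_const 1).pow 2).const_mul a
    refine h.congr_deriv ?_
    norm_num
    ring
  have hfderiv : ∀ s : ℝ, deriv (fun x : ℝ => a * (x ^ 2 - 1) ^ 2) s
      = 4 * a * s * (s ^ 2 - 1) := fun s => (hfd s).deriv
  have hit : ∀ F : ℝ → ℝ, iteratedDeriv 2 F = deriv (deriv F) := by
    intro F
    simp [show (2:ℕ) = 1 + 1 from rfl, iteratedDeriv_succ, iteratedDeriv_zero]
  -- the candidate
  set θ : ℝ → ℝ := fun ρ => Real.tanh (k * ρ) with hθdef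
  have hT1 : ∀ ρ : ℝ, HasDerivAt θ (k * (1 - θ ρ ^ 2)) ρ := by
    intro ρ
    have h := (hasDerivAt_tanh (k * ρ)).comp ρ ((hasDerivAt_id ρ).const_mul k)
    have h2 : HasDerivAt θ ((1 - Real.tanh (k * ρ) ^ 2) * (k * 1)) ρ := h
    convert h2 using 1
    ring
  have hθcd : ContDiff ℝ (⊤ : ℕ∞) θ := contDiff_tanh.comp (contDiff_const.mul contDiff_id)
  have hθmono : StrictMono θ :=
    strictMono_tanh.comp (fun x y hxy => (mul_lt_mul_iff_right₀ hk0).mpr hxy)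
  have hθIoo : ∀ ρ, θ ρ ∈ Set.Ioo (-1 : ℝ) 1 := fun ρ => tanh_mem_Ioo _
  have hθderiv : deriv θ = fun ρ => k * (1 - θ ρ ^ 2) := funext fun ρ => (hT1 ρ).deriv
  have hθ2 : ∀ ρ, deriv (deriv θ) ρ = 4 * a * θ ρ * (θ ρ ^ 2 - 1) := by
    intro ρ
    rw [hθderiv]
    have h1 : HasDerivAt (fun ρ => θ ρ ^ 2) (2 * θ ρ ^ 1 * (k * (1 - θ ρ ^ 2))) ρ :=
      (hT1 ρ).pow 2
    have h2 := (h1.const_sub 1).const_mul k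
    rw [h2.deriv]
    linear_combination (2 * θ ρ ^ 3 - 2 * θ ρ) * hk2
  have hθode : ∀ ρ, -iteratedDeriv 2 θ ρ + deriv (fun x : ℝ => a * (x ^ 2 - 1) ^ 2) (θ ρ) = 0 := by
    intro ρ
    rw [hit θ, hθ2 ρ, hfderiv]
    ring
  have hθ0 : θ 0 = 0 := by simp [hθdef]
  have hθtop : Tendsto θ atTop (𝓝 1) :=
    tendsto_tanh_atTop.comp (Tendsto.const_mul_atTop hk0 tendsto_id)
  have hθbot : Tendsto θ atBot (𝓝 (-1)) :=
    tendsto_tanh_atBot.comp (Tendsto.const_mul_atBot hk0 tendsto_id)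
  refine ⟨θ, ⟨hθcd, hθmono, hθIoo, hθode, hθ0, hθtop, hθbot⟩, ?_⟩
  rintro g ⟨hgc, hgm, hgIoo, hgode, hg0, hgtop, hgbot⟩
  have hgdiff : Differentiable ℝ g := hgc.differentiable (by simp)
  have hgd' : Differentiable ℝ (deriv g) :=
    ((contDiff_infty_iff_deriv.mp (hgc.of_le (by simp))).2).differentiable
      (by simp)
  have hode2 : ∀ ρ, deriv (deriv g) ρ = 4 * a * g ρ * (g ρ ^ 2 - 1) := by
    intro ρ
    have h := hgode ρ
    rw [hit g, hfderiv] at h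
    linarith
  set E : ℝ → ℝ := fun ρ => (deriv g ρ) ^ 2 - 2 * (a * (g ρ ^ 2 - 1) ^ 2) with hEdef
  have hE' : ∀ ρ, HasDerivAt E 0 ρ := by
    intro ρ
    have h1 : HasDerivAt (deriv g) (deriv (deriv g) ρ) ρ := (hgd' ρ).hasDerivAt
    have h2 : HasDerivAt (fun ρ => (deriv g ρ) ^ 2)
        (2 * deriv g ρ ^ 1 * deriv (deriv g) ρ) ρ := h1.pow 2
    have h3 : HasDerivAt (fun ρ => a * (g ρ ^ 2 - 1) ^ 2)
        (4 * a * g ρ * (g ρ ^ 2 - 1) * deriv g ρ) ρ :=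
      (hfd (g ρ)).comp ρ (hgdiff ρ).hasDerivAt
    have h4 := h2.sub (h3.const_mul 2)
    refine h4.congr_deriv ?_
    rw [hode2 ρ]
    ring
  have hEc : ∀ ρ, E ρ = E 0 := fun ρ =>
    is_const_of_deriv_eq_zero (fun x => (hE' x).differentiableAt)
      (fun x => (hE' x).deriv) ρ 0
  have key0 : ∀ ρ, (deriv g ρ) ^ 2 = E 0 + 2 * a * (g ρ ^ 2 - 1) ^ 2 := by
    intro ρ
    have e1 : E ρ = (deriv g ρ) ^ 2 - 2 * (a * (g ρ ^ 2 - 1) ^ 2) := rfl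
    have h := hEc ρ
    rw [e1] at h
    linarith
  obtain ⟨c, key⟩ : ∃ c : ℝ, ∀ ρ, (deriv g ρ) ^ 2 = c + 2 * a * (g ρ ^ 2 - 1) ^ 2 :=
    ⟨E 0, key0⟩
  have hg'0 : ∀ ρ, 0 ≤ deriv g ρ := fun ρ =>
    deriv_nonneg_of_monot hgm.monotone (hgdiff ρ).hasDerivAt
  have hcle : c ≤ 0 := by
    by_contra hcpos
    push_neg at hcpos
    have hc' : 0 < Real.sqrt c := Real.sqrt_pos.mpr hcpos
    have hsq : ∀ ρ, Real.sqrt c ≤ deriv g ρ := by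
      intro ρ
      have h1 : c ≤ (deriv g ρ) ^ 2 := by nlinarith [key ρ, sq_nonneg (g ρ ^ 2 - 1), ha.le]
      calc Real.sqrt c ≤ Real.sqrt ((deriv g ρ) ^ 2) := Real.sqrt_le_sqrt h1
        _ = deriv g ρ := Real.sqrt_sq (hg'0 ρ)
    have hmono : Monotone (fun ρ => g ρ - Real.sqrt c * ρ) := by
      apply monotone_of_deriv_nonneg
      · exact hgdiff.sub (differentiable_id.const_mul _)
      · intro x
        have hd : HasDerivAt (fun ρ => g ρ - Real.sqrt c * ρ)
            (deriv g x - Real.sqrt c * 1) x :=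
          (hgdiff x).hasDerivAt.sub ((hasDerivAt_id x).const_mul (Real.sqrt c))
        rw [hd.deriv]
        linarith [hsq x]
    have h20 := hmono (div_pos two_pos hc').le
    have hfs : Real.sqrt c * (2 / Real.sqrt c) = 2 := by field_simp
    have hlt := (hgIoo (2 / Real.sqrt c)).2
    simp only [hg0, mul_zero, sub_zero] at h20
    rw [hfs] at h20
    linarith
  have hcge : 0 ≤ c := by
    by_contra hcneg
    push_neg at hcneg
    have hcont : Continuous (fun x : ℝ => a * (x ^ 2 - 1) ^ 2) :=
      continuous_const.mul (((continuous_pow 2).sub continuous_const).pow 2)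
    have htend : Tendsto (fun ρ => a * (g ρ ^ 2 - 1) ^ 2) atTop (𝓝 0) := by
      have h := (hcont.tendsto 1).comp hgtop
      simpa [Function.comp_def] using h
    have hev := htend.eventually_lt_const (show (0:ℝ) < -c / 2 by linarith)
    obtain ⟨ρ, hρ⟩ := hev.exists
    nlinarith [key ρ, sq_nonneg (deriv g ρ)]
  have hc0 : c = 0 := le_antisymm hcle hcge
  have hgfirst : ∀ ρ, deriv g ρ = k * (1 - g ρ ^ 2) := by
    intro ρ
    have h1 := key ρ
    rw [hc0, zero_add] at h1
    have h2 : (deriv g ρ) ^ 2 = (k * (1 - g ρ ^ 2)) ^ 2 := by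
      rw [h1]
      linear_combination (-(1 - g ρ ^ 2) ^ 2) * hk2
    have h3 : 0 ≤ k * (1 - g ρ ^ 2) := by
      have h4 := hgIoo ρ
      have h5 : (0:ℝ) < 1 - g ρ ^ 2 := by nlinarith [h4.1, h4.2]
      exact (mul_pos hk0 h5).le
    calc deriv g ρ = Real.sqrt ((deriv g ρ) ^ 2) := (Real.sqrt_sq (hg'0 ρ)).symm
      _ = Real.sqrt ((k * (1 - g ρ ^ 2)) ^ 2) := by rw [h2]
      _ = k * (1 - g ρ ^ 2) := Real.sqrt_sq h3
  funext ρ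
  have hb0 : (0:ℝ) < |ρ| + 1 := by positivity
  have hmem : ρ ∈ Set.Icc (-(|ρ| + 1)) (|ρ| + 1) :=
    ⟨by linarith [neg_abs_le ρ], by linarith [le_abs_self ρ]⟩
  have h0mem : (0:ℝ) ∈ Set.Ioo (-(|ρ| + 1)) (|ρ| + 1) := ⟨by linarith, hb0⟩
  have happ := ODE_solution_unique_of_mem_Icc
    (v := fun _ x => k * (1 - (max (-1 : ℝ) (min 1 x)) ^ 2))
    (s := fun _ => Set.univ) (K := (2 * k).toNNReal)
    (fun _ _ => (clamp_lip k hk0.le).lipschitzOnWith)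
    h0mem
    hgdiff.continuous.continuousOn
    (fun t _ => by
      have h1 := hgIoo t
      show HasDerivAt g (k * (1 - (max (-1:ℝ) (min 1 (g t))) ^ 2)) t
      rw [clamp_eq h1.1.le h1.2.le, ← hgfirst t]
      exact (hgdiff t).hasDerivAt)
    (fun _ _ => trivial)
    (hθcd.continuous.continuousOn)
    (fun t _ => by
      have h1 := hθIoo t
      show HasDerivAt θ (k * (1 - (max (-1:ℝ) (min 1 (θ t))) ^ 2)) t
      rw [clamp_eq h1.1.le h1.2.le]
      exact hT1 t)
    (fun _ _ => trivial)
    (by rw [hg0, hθ0])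
  exact happ hmem
end

section
/- Let θ₀ be the optimal profile and let θ₁ ∈ L^∞(ℝ) solve θ₁'' − f''(θ₀)θ₁ = σ − θ₀' on ℝ with θ₁(0) = 0. Then ∫_ℝ f⁽³⁾(θ₀(ρ)) (θ₀'(ρ))² θ₁(ρ) dρ = 0. -/
open MeasureTheory Filter

private lemma contDiff_iteratedDeriv_top {g : ℝ → ℝ} (hg : ContDiff ℝ ((⊤ : ℕ∞) : WithTop ℕ∞) g)
    (n : ℕ) : ContDiff ℝ ((⊤ : ℕ∞) : WithTop ℕ∞) (iteratedDeriv n g) := by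
  induction n with
  | zero => simpa [iteratedDeriv_zero] using hg
  | succ n ih =>
    rw [iteratedDeriv_succ]
    exact (contDiff_infty_iff_deriv.mp ih).2

private lemma tendsto_mul_exp_neg_mul {a : ℝ} (ha : 0 < a) :
    Tendsto (fun x : ℝ => x * Real.exp (-a * x)) atTop (nhds 0) := by
  have h1 : Tendsto (fun y : ℝ => (1 / a) * (y ^ 1 * Real.exp (-y))) atTop (nhds 0) := by
    simpa using (Real.tendsto_pow_mul_exp_neg_atTop_nhds_zero 1).const_mul (1 / a)
  have h2 : Tendsto (fun x : ℝ => a * x) atTop atTop :=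
    Tendsto.const_mul_atTop ha tendsto_id
  have := h1.comp h2
  refine this.congr fun x => ?_
  simp only [Function.comp_apply, pow_one]
  field_simp

theorem stmt_3 (f θ₀ θ₁ : ℝ → ℝ) (σ : ℝ)
    (hf : ContDiff ℝ (⊤ : ℕ∞) f) (hθ₀ : ContDiff ℝ (⊤ : ℕ∞) θ₀) (hθ₁ : ContDiff ℝ (⊤ : ℕ∞) θ₁)
    (hODE : ∀ ρ, -iteratedDeriv 2 θ₀ ρ + deriv f (θ₀ ρ) = 0)
    (h00 : θ₀ 0 = 0)
    (htop : Tendsto θ₀ atTop (nhds 1))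
    (hbot : Tendsto θ₀ atBot (nhds (-1)))
    (hdecay : ∃ C a : ℝ, 0 < C ∧ 0 < a ∧
      ∀ ρ, |deriv θ₀ ρ| + |iteratedDeriv 2 θ₀ ρ| ≤ C * Real.exp (-a * |ρ|))
    (hσ : σ = (1 / 2) * ∫ ρ : ℝ, (deriv θ₀ ρ) ^ 2)
    (hθ₁ODE : ∀ ρ, iteratedDeriv 2 θ₁ ρ - iteratedDeriv 2 f (θ₀ ρ) * θ₁ ρ = σ - deriv θ₀ ρ)
    (hθ₁0 : θ₁ 0 = 0)
    (hθ₁bdd : ∃ Cb : ℝ, ∀ ρ, |θ₁ ρ| ≤ Cb)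
    (hint : Integrable (fun ρ => iteratedDeriv 3 f (θ₀ ρ) * (deriv θ₀ ρ) ^ 2 * θ₁ ρ)) :
    (∫ ρ : ℝ, iteratedDeriv 3 f (θ₀ ρ) * (deriv θ₀ ρ) ^ 2 * θ₁ ρ) = 0 := by
  obtain ⟨C, a, hC, ha, hCa⟩ := hdecay
  have h1le : ((⊤ : ℕ∞) : WithTop ℕ∞) ≠ 0 := by simp
  have hfs : ContDiff ℝ ((⊤ : ℕ∞) : WithTop ℕ∞) f := hf.of_le (by simp)
  have hθ₀s : ContDiff ℝ ((⊤ : ℕ∞) : WithTop ℕ∞) θ₀ := hθ₀.of_le (by simp)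
  have hθ₁s : ContDiff ℝ ((⊤ : ℕ∞) : WithTop ℕ∞) θ₁ := hθ₁.of_le (by simp)
  obtain ⟨Cb, hCb⟩ := hθ₁bdd
  have hCb0 : 0 ≤ Cb := le_trans (abs_nonneg _) (hCb 0)
  -- basic rewrites of the ODE
  have hODE' : ∀ ρ, iteratedDeriv 2 θ₀ ρ = deriv f (θ₀ ρ) := fun ρ => by linarith [hODE ρ]
  have h2θ₀ : deriv (deriv θ₀) = iteratedDeriv 2 θ₀ := by
    rw [iteratedDeriv_succ, iteratedDeriv_one]
  have h2θ₁ : deriv (deriv θ₁) = iteratedDeriv 2 θ₁ := by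
    rw [iteratedDeriv_succ, iteratedDeriv_one]
  have h2f : deriv (deriv f) = iteratedDeriv 2 f := by
    rw [iteratedDeriv_succ, iteratedDeriv_one]
  have h3f : deriv (iteratedDeriv 2 f) = iteratedDeriv 3 f := (iteratedDeriv_succ).symm
  -- HasDerivAt facts
  have hdθ₀ : ∀ ρ, HasDerivAt θ₀ (deriv θ₀ ρ) ρ := fun ρ =>
    ((hθ₀s.differentiable h1le) ρ).hasDerivAt
  have hdθ₀' : ∀ ρ, HasDerivAt (deriv θ₀) (deriv f (θ₀ ρ)) ρ := by
    intro ρ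
    have h := (((contDiff_infty_iff_deriv.mp hθ₀s).2.differentiable h1le) ρ).hasDerivAt
    rwa [h2θ₀, hODE' ρ] at h
  have hdf' : ∀ x, HasDerivAt (deriv f) (iteratedDeriv 2 f x) x := by
    intro x
    have h := (((contDiff_infty_iff_deriv.mp hfs).2.differentiable h1le) x).hasDerivAt
    rwa [h2f] at h
  have hdf'' : ∀ x, HasDerivAt (iteratedDeriv 2 f) (iteratedDeriv 3 f x) x := by
    intro x
    have h := (((contDiff_iteratedDeriv_top hfs 2).differentiable h1le) x).hasDerivAt
    rwa [h3f] at h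
  have hdθ₁ : ∀ ρ, HasDerivAt θ₁ (deriv θ₁ ρ) ρ := fun ρ =>
    ((hθ₁s.differentiable h1le) ρ).hasDerivAt
  have hdθ₁' : ∀ ρ, HasDerivAt (deriv θ₁) (iteratedDeriv 2 θ₁ ρ) ρ := by
    intro ρ
    have h := (((contDiff_infty_iff_deriv.mp hθ₁s).2.differentiable h1le) ρ).hasDerivAt
    rwa [h2θ₁] at h
  -- the primitive F
  set F : ℝ → ℝ := fun ρ =>
    iteratedDeriv 2 f (θ₀ ρ) * deriv θ₀ ρ * θ₁ ρ - deriv f (θ₀ ρ) * deriv θ₁ ρ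
      + σ * deriv θ₀ ρ - 1 / 2 * (deriv θ₀ ρ) ^ 2 with hFdef
  have hF : ∀ ρ, HasDerivAt F (iteratedDeriv 3 f (θ₀ ρ) * (deriv θ₀ ρ) ^ 2 * θ₁ ρ) ρ := by
    intro ρ
    have h1 : HasDerivAt (fun ρ => iteratedDeriv 2 f (θ₀ ρ))
        (iteratedDeriv 3 f (θ₀ ρ) * deriv θ₀ ρ) ρ := (hdf'' (θ₀ ρ)).comp ρ (hdθ₀ ρ)
    have h2 : HasDerivAt (fun ρ => deriv f (θ₀ ρ))
        (iteratedDeriv 2 f (θ₀ ρ) * deriv θ₀ ρ) ρ := (hdf' (θ₀ ρ)).comp ρ (hdθ₀ ρ)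
    have T1 := (h1.mul (hdθ₀' ρ)).mul (hdθ₁ ρ)
    have T2 := h2.mul (hdθ₁' ρ)
    have T3 := (hdθ₀' ρ).const_mul σ
    have T4 := ((hdθ₀' ρ).pow 2).const_mul (1 / 2 : ℝ)
    have hcomb := ((T1.sub T2).add T3).sub T4
    refine hcomb.congr_deriv ?_
    have h := hθ₁ODE ρ
    have hq : iteratedDeriv 2 θ₁ ρ = iteratedDeriv 2 f (θ₀ ρ) * θ₁ ρ + σ - deriv θ₀ ρ := by
      linarith
    rw [hq, Pi.mul_apply]
    ring
  -- boundedness of θ₀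
  have hbθ₀ : ∃ M : ℝ, 0 ≤ M ∧ ∀ ρ, |θ₀ ρ| ≤ M := by
    have h1 : ∀ᶠ ρ in atTop, θ₀ ρ ∈ Set.Icc (0 : ℝ) 2 :=
      htop.eventually (Icc_mem_nhds (by norm_num) (by norm_num))
    have h2 : ∀ᶠ ρ in atBot, θ₀ ρ ∈ Set.Icc (-2 : ℝ) 0 :=
      hbot.eventually (Icc_mem_nhds (by norm_num) (by norm_num))
    obtain ⟨R1, hR1⟩ := eventually_atTop.mp h1
    obtain ⟨R2, hR2⟩ := eventually_atBot.mp h2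
    obtain ⟨C0, hC0⟩ := (isCompact_Icc (a := R2) (b := R1)).exists_bound_of_continuousOn
      (hθ₀.continuous.continuousOn)
    refine ⟨max C0 2, le_trans (by norm_num) (le_max_right _ _), fun ρ => ?_⟩
    rcases le_or_gt ρ R1 with h | h
    · rcases le_or_gt R2 ρ with h' | h'
      · exact le_trans (hC0 ρ ⟨h', h⟩) (le_max_left _ _)
      · have := hR2 ρ h'.le
        refine le_trans (abs_le.mpr ⟨by linarith [this.1], by linarith [this.2]⟩)
          (le_max_right _ _)
    · have := hR1 ρ h.le
      refine le_trans (abs_le.mpr ⟨by linarith [this.1], by linarith [this.2]⟩)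
        (le_max_right _ _)
  obtain ⟨M, hM0, hM⟩ := hbθ₀
  -- bound on f'' ∘ θ₀
  have hbf2 : ∃ M₂ : ℝ, 0 ≤ M₂ ∧ ∀ ρ, |iteratedDeriv 2 f (θ₀ ρ)| ≤ M₂ := by
    obtain ⟨B, hB⟩ := (isCompact_Icc (a := -M) (b := M)).exists_bound_of_continuousOn
      ((contDiff_iteratedDeriv_top hfs 2).continuous.continuousOn)
    refine ⟨max B 0, le_max_right _ _, fun ρ => ?_⟩
    exact le_trans (hB (θ₀ ρ) (abs_le.mp (hM ρ))) (le_max_left _ _)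
  obtain ⟨M₂, hM₂0, hM₂⟩ := hbf2
  -- exp factor facts
  have hE1 : ∀ ρ : ℝ, Real.exp (-a * |ρ|) ≤ 1 := by
    intro ρ
    rw [Real.exp_le_one_iff]
    have : 0 ≤ a * |ρ| := mul_nonneg ha.le (abs_nonneg _)
    linarith
  have hb1 : ∀ ρ, |deriv θ₀ ρ| ≤ C * Real.exp (-a * |ρ|) := fun ρ => by
    linarith [hCa ρ, abs_nonneg (iteratedDeriv 2 θ₀ ρ)]
  have hb2 : ∀ ρ, |deriv f (θ₀ ρ)| ≤ C * Real.exp (-a * |ρ|) := fun ρ => by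
    rw [← hODE' ρ]; linarith [hCa ρ, abs_nonneg (deriv θ₀ ρ)]
  have hb1' : ∀ ρ, |deriv θ₀ ρ| ≤ C := fun ρ => by
    have := hb1 ρ
    have h2 := hE1 ρ
    nlinarith [Real.exp_pos (-a * |ρ|)]
  -- θ₁'' is bounded
  have hbθ₁'' : ∀ ρ, |iteratedDeriv 2 θ₁ ρ| ≤ M₂ * Cb + |σ| + C := by
    intro ρ
    have h := hθ₁ODE ρ
    have hq : iteratedDeriv 2 θ₁ ρ = iteratedDeriv 2 f (θ₀ ρ) * θ₁ ρ + σ - deriv θ₀ ρ := by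
      linarith
    rw [hq]
    calc |iteratedDeriv 2 f (θ₀ ρ) * θ₁ ρ + σ - deriv θ₀ ρ|
        ≤ |iteratedDeriv 2 f (θ₀ ρ) * θ₁ ρ + σ| + |deriv θ₀ ρ| := abs_sub _ _
      _ ≤ |iteratedDeriv 2 f (θ₀ ρ) * θ₁ ρ| + |σ| + |deriv θ₀ ρ| := by
          linarith [abs_add_le (iteratedDeriv 2 f (θ₀ ρ) * θ₁ ρ) σ]
      _ ≤ M₂ * Cb + |σ| + C := by
          have := hb1' ρ
          have h2 : |iteratedDeriv 2 f (θ₀ ρ) * θ₁ ρ| ≤ M₂ * Cb := by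
            rw [abs_mul]
            exact mul_le_mul (hM₂ ρ) (hCb ρ) (abs_nonneg _) hM₂0
          linarith
  set K : ℝ := M₂ * Cb + |σ| + C with hKdef
  clear_value K
  have hK0 : 0 ≤ K := by
    have := hbθ₁'' 0
    have := abs_nonneg (iteratedDeriv 2 θ₁ 0)
    linarith
  -- θ₁' grows at most linearly
  set A : ℝ := |deriv θ₁ 0| with hAdef
  have hA0 : 0 ≤ A := hAdef ▸ abs_nonneg _
  clear_value A
  have hbθ₁' : ∀ ρ, |deriv θ₁ ρ| ≤ A + K * |ρ| := by
    intro ρ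
    have h := convex_univ.norm_image_sub_le_of_norm_deriv_le
      (f := deriv θ₁) (C := K)
      (fun x _ => ((contDiff_infty_iff_deriv.mp hθ₁s).2.differentiable h1le) x)
      (fun x _ => by simpa [h2θ₁] using hbθ₁'' x)
      (Set.mem_univ (0 : ℝ)) (Set.mem_univ ρ)
    simp only [Real.norm_eq_abs, sub_zero] at h
    calc |deriv θ₁ ρ| = |deriv θ₁ 0 + (deriv θ₁ ρ - deriv θ₁ 0)| := by ring_nf
      _ ≤ |deriv θ₁ 0| + |deriv θ₁ ρ - deriv θ₁ 0| := abs_add_le _ _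
      _ ≤ A + K * |ρ| := by linarith
  -- the pointwise bound on F
  set D : ℝ := M₂ * Cb * C + C * (A + K) + |σ| * C + C ^ 2 / 2 with hDdef
  clear_value D
  have hFb : ∀ ρ, ‖F ρ‖ ≤ D * (1 + |ρ|) * Real.exp (-a * |ρ|) := by
    intro ρ
    have e1 := hb1 ρ
    have e2 := hb2 ρ
    have e3 := hCb ρ
    have e4 := hM₂ ρ
    have e5 := hbθ₁' ρ
    have eE1 := hE1 ρ
    have eE0 := (Real.exp_pos (-a * |ρ|)).le
    have hr0 : (0 : ℝ) ≤ |ρ| := abs_nonneg _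
    have habs : |F ρ| ≤ |iteratedDeriv 2 f (θ₀ ρ) * deriv θ₀ ρ * θ₁ ρ|
        + |deriv f (θ₀ ρ) * deriv θ₁ ρ| + |σ * deriv θ₀ ρ|
        + |1 / 2 * (deriv θ₀ ρ) ^ 2| := by
      rw [hFdef]
      calc |iteratedDeriv 2 f (θ₀ ρ) * deriv θ₀ ρ * θ₁ ρ - deriv f (θ₀ ρ) * deriv θ₁ ρ
            + σ * deriv θ₀ ρ - 1 / 2 * (deriv θ₀ ρ) ^ 2|
          ≤ |iteratedDeriv 2 f (θ₀ ρ) * deriv θ₀ ρ * θ₁ ρ - deriv f (θ₀ ρ) * deriv θ₁ ρ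
            + σ * deriv θ₀ ρ| + |1 / 2 * (deriv θ₀ ρ) ^ 2| := abs_sub _ _
        _ ≤ |iteratedDeriv 2 f (θ₀ ρ) * deriv θ₀ ρ * θ₁ ρ - deriv f (θ₀ ρ) * deriv θ₁ ρ|
            + |σ * deriv θ₀ ρ| + |1 / 2 * (deriv θ₀ ρ) ^ 2| := by
            linarith [abs_add_le (iteratedDeriv 2 f (θ₀ ρ) * deriv θ₀ ρ * θ₁ ρ
              - deriv f (θ₀ ρ) * deriv θ₁ ρ) (σ * deriv θ₀ ρ)]
        _ ≤ _ := by
            linarith [abs_sub (iteratedDeriv 2 f (θ₀ ρ) * deriv θ₀ ρ * θ₁ ρ)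
              (deriv f (θ₀ ρ) * deriv θ₁ ρ)]
    have t1 : |iteratedDeriv 2 f (θ₀ ρ) * deriv θ₀ ρ * θ₁ ρ|
        ≤ M₂ * (C * Real.exp (-a * |ρ|)) * Cb := by
      rw [abs_mul, abs_mul]
      have h1 : |iteratedDeriv 2 f (θ₀ ρ)| * |deriv θ₀ ρ| ≤ M₂ * (C * Real.exp (-a * |ρ|)) :=
        mul_le_mul e4 e1 (abs_nonneg _) hM₂0
      exact mul_le_mul h1 e3 (abs_nonneg _)
        (mul_nonneg hM₂0 (mul_nonneg hC.le eE0))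
    have t2 : |deriv f (θ₀ ρ) * deriv θ₁ ρ|
        ≤ C * Real.exp (-a * |ρ|) * (A + K * |ρ|) := by
      rw [abs_mul]
      exact mul_le_mul e2 e5 (abs_nonneg _) (mul_nonneg hC.le eE0)
    have t3 : |σ * deriv θ₀ ρ| ≤ |σ| * (C * Real.exp (-a * |ρ|)) := by
      rw [abs_mul]
      exact mul_le_mul le_rfl e1 (abs_nonneg _) (abs_nonneg _)
    have t4 : |1 / 2 * (deriv θ₀ ρ) ^ 2|
        ≤ 1 / 2 * ((C * Real.exp (-a * |ρ|)) * C) := by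
      rw [abs_mul, abs_pow]
      have h1 : |deriv θ₀ ρ| ^ 2 ≤ (C * Real.exp (-a * |ρ|)) * C := by
        have := hb1' ρ
        nlinarith [abs_nonneg (deriv θ₀ ρ)]
      have : |(1 : ℝ) / 2| = 1 / 2 := by norm_num
      rw [this]
      linarith
    rw [Real.norm_eq_abs]
    have hDexp : D * (1 + |ρ|) * Real.exp (-a * |ρ|)
        = M₂ * (C * Real.exp (-a * |ρ|)) * Cb
          + C * Real.exp (-a * |ρ|) * (A + K * |ρ|)
          + |σ| * (C * Real.exp (-a * |ρ|))
          + 1 / 2 * ((C * Real.exp (-a * |ρ|)) * C)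
          + (M₂ * Cb * C * |ρ| + C * A * |ρ| + C * K + |σ| * C * |ρ| + C ^ 2 / 2 * |ρ|) * Real.exp (-a * |ρ|) := by
      rw [hDdef]; ring
    have hrest : 0 ≤ (M₂ * Cb * C * |ρ| + C * A * |ρ| + C * K + |σ| * C * |ρ| + C ^ 2 / 2 * |ρ|) * Real.exp (-a * |ρ|) := by
      positivity
    refine le_trans habs ?_
    linarith [hDexp, hrest, t1, t2, t3, t4]
  -- limits of F at ±∞
  have hGlim : Tendsto (fun x : ℝ => D * (1 + x) * Real.exp (-a * x)) atTop (nhds 0) := by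
    have h1 : Tendsto (fun x : ℝ => Real.exp (-a * x)) atTop (nhds 0) := by
      have : Tendsto (fun x : ℝ => a * x) atTop atTop :=
        Tendsto.const_mul_atTop ha tendsto_id
      have := Real.tendsto_exp_neg_atTop_nhds_zero.comp this
      refine this.congr fun x => ?_
      simp [Function.comp, neg_mul]
    have h2 := tendsto_mul_exp_neg_mul ha
    have h3 : Tendsto (fun x : ℝ => D * (Real.exp (-a * x) + x * Real.exp (-a * x)))
        atTop (nhds 0) := by
      have := (h1.add h2).const_mul D
      simpa using this
    refine h3.congr fun x => ?_
    ring
  have hFtop : Tendsto F atTop (nhds 0) :=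
    squeeze_zero_norm (fun ρ => by simpa using hFb ρ) (hGlim.comp tendsto_abs_atTop_atTop)
  have hFbot : Tendsto F atBot (nhds 0) :=
    squeeze_zero_norm (fun ρ => by simpa using hFb ρ) (hGlim.comp tendsto_abs_atBot_atTop)
  -- conclude via FTC on both half-lines
  have hIoi : ∫ ρ in Set.Ioi (0 : ℝ), iteratedDeriv 3 f (θ₀ ρ) * (deriv θ₀ ρ) ^ 2 * θ₁ ρ
      = 0 - F 0 :=
    integral_Ioi_of_hasDerivAt_of_tendsto' (fun x _ => hF x) hint.integrableOn hFtop
  have hIic : ∫ ρ in Set.Iic (0 : ℝ), iteratedDeriv 3 f (θ₀ ρ) * (deriv θ₀ ρ) ^ 2 * θ₁ ρ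
      = F 0 - 0 :=
    integral_Iic_of_hasDerivAt_of_tendsto' (fun x _ => hF x) hint.integrableOn hFbot
  have hsplit := intervalIntegral.integral_Iic_add_Ioi (μ := volume) (b := (0 : ℝ))
    hint.integrableOn hint.integrableOn
  rw [← hsplit, hIoi, hIic]
  ring
end

section
/- Under the same geometric setup, for ψ ∈ L^{2,∞}(Γ_t(2δ)), η ∈ L²(ℝ), and u ∈ L²(Γ_t(2δ)): ‖η(d_Γ(·,t)/ε − h(S(·,t))) ψ u‖_{L¹(Γ_t(2δ))} ≤ C ε^{1/2} ‖η‖_{L²(ℝ)} ‖ψ‖_{L^{2,∞}(Γ_t(2δ))} ‖u‖_{L²(Γ_t(2δ))} for all ε ∈ (0,1). -/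
open MeasureTheory intervalIntegral

local instance : Fact ((0 : ℝ) < 1) := ⟨one_pos⟩

/-!
On each normal fibre, bound `|ψ|` by `Ψ(s)` and `|J|` by `CJ` and apply Cauchy–Schwarz in `r`;
the substitution `ρ = r/ε − h(s)` shows that the `L²` norm of `r ↦ η(r/ε − h(s))` is at most
`ε^{1/2} ‖η‖_{L²(ℝ)}`, uniformly in `s`. Cauchy–Schwarz in `s` then pairs `Ψ` with the fibrewise
`L²` norms of `u`.
-/

section CauchySchwarz

variable {α : Type*} [MeasurableSpace α] {μ : Measure α} {f g : α → ℝ}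

lemma memLp_two_abs_of_integrable_sq (hf : AEStronglyMeasurable f μ)
    (hf2 : Integrable (fun x => f x ^ 2) μ) : MemLp (fun x => |f x|) 2 μ :=
  (memLp_two_iff_integrable_sq hf.norm).2 (by simpa only [Real.norm_eq_abs, sq_abs] using hf2)

lemma integrable_abs_mul_abs_of_integrable_sq (hf : AEStronglyMeasurable f μ)
    (hg : AEStronglyMeasurable g μ) (hf2 : Integrable (fun x => f x ^ 2) μ)
    (hg2 : Integrable (fun x => g x ^ 2) μ) : Integrable (fun x => |f x| * |g x|) μ :=
  (memLp_two_abs_of_integrable_sq hf hf2).integrable_mul (memLp_two_abs_of_integrable_sq hg hg2)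

lemma integral_abs_mul_abs_le_sqrt_mul_sqrt (hf : AEStronglyMeasurable f μ)
    (hg : AEStronglyMeasurable g μ) (hf2 : Integrable (fun x => f x ^ 2) μ)
    (hg2 : Integrable (fun x => g x ^ 2) μ) :
    ∫ x, |f x| * |g x| ∂μ ≤ Real.sqrt (∫ x, f x ^ 2 ∂μ) * Real.sqrt (∫ x, g x ^ 2 ∂μ) := by
  have holder := integral_mul_le_Lp_mul_Lq_of_nonneg Real.HolderConjugate.two_two
    (ae_of_all _ fun x => abs_nonneg (f x)) (ae_of_all _ fun x => abs_nonneg (g x))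
    (by simpa using memLp_two_abs_of_integrable_sq hf hf2)
    (by simpa using memLp_two_abs_of_integrable_sq hg hg2)
  simpa only [Real.rpow_two, sq_abs, Real.sqrt_eq_rpow] using holder

end CauchySchwarz

section Rescaling

variable {η : ℝ → ℝ} {ε : ℝ}

lemma setIntegral_sq_comp_div_sub_le (hη : Integrable (fun ρ => η ρ ^ 2)) (hε : 0 < ε)
    (c : ℝ) (S : Set ℝ) : ∫ r in S, η (r / ε - c) ^ 2 ≤ ε * ∫ ρ, η ρ ^ 2 :=
  calc ∫ r in S, η (r / ε - c) ^ 2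
      ≤ ∫ r, η (r / ε - c) ^ 2 :=
        setIntegral_le_integral ((hη.comp_sub_right c).comp_div hε.ne')
          (ae_of_all _ fun _ => sq_nonneg _)
    _ = ε * ∫ ρ, η ρ ^ 2 := by
        rw [Measure.integral_comp_div (fun x => η (x - c) ^ 2),
          integral_sub_right_eq_self (fun x => η x ^ 2), abs_of_pos hε, smul_eq_mul]

lemma setIntegral_abs_comp_div_sub_mul_abs_le (hη : Measurable η)
    (hη2 : Integrable (fun ρ => η ρ ^ 2)) (hε : 0 < ε) (c : ℝ) {S : Set ℝ} {v : ℝ → ℝ}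
    (hv : AEStronglyMeasurable v (volume.restrict S)) (hv2 : IntegrableOn (fun r => v r ^ 2) S) :
    ∫ r in S, |η (r / ε - c)| * |v r|
      ≤ Real.sqrt ε * Real.sqrt (∫ ρ, η ρ ^ 2) * Real.sqrt (∫ r in S, v r ^ 2) :=
  calc ∫ r in S, |η (r / ε - c)| * |v r|
      ≤ Real.sqrt (∫ r in S, η (r / ε - c) ^ 2) * Real.sqrt (∫ r in S, v r ^ 2) :=
        integral_abs_mul_abs_le_sqrt_mul_sqrt
          (by fun_prop : Measurable fun r => η (r / ε - c)).aestronglyMeasurable hv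
          ((hη2.comp_sub_right c).comp_div hε.ne').integrableOn hv2
    _ ≤ Real.sqrt (ε * ∫ ρ, η ρ ^ 2) * Real.sqrt (∫ r in S, v r ^ 2) := by
        gcongr
        exact setIntegral_sq_comp_div_sub_le hη2 hε c S
    _ = Real.sqrt ε * Real.sqrt (∫ ρ, η ρ ^ 2) * Real.sqrt (∫ r in S, v r ^ 2) := by
        rw [Real.sqrt_mul hε.le]

end Rescaling

lemma intervalIntegral_abs_comp_div_sub_mul_le {a b ε c P C : ℝ} {η p v j : ℝ → ℝ} (hab : a ≤ b)
    (hε : 0 < ε) (hη : Measurable η) (hη2 : Integrable (fun ρ => η ρ ^ 2))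
    (hp : ∀ r ∈ Set.Icc a b, |p r| ≤ P) (hj : ∀ r ∈ Set.Icc a b, |j r| ≤ C)
    (hv : Measurable v) (hv2 : IntegrableOn (fun r => v r ^ 2) (Set.Icc a b)) :
    ∫ r in a..b, |η (r / ε - c)| * |p r| * |v r| * |j r|
      ≤ C * P * (Real.sqrt ε * Real.sqrt (∫ ρ, η ρ ^ 2) * Real.sqrt (∫ r in a..b, v r ^ 2)) := by
  have ha : a ∈ Set.Icc a b := Set.left_mem_Icc.2 hab
  have hP : 0 ≤ P := (abs_nonneg _).trans (hp a ha)
  have hC : 0 ≤ C := (abs_nonneg _).trans (hj a ha)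
  have hv2' : IntegrableOn (fun r => v r ^ 2) (Set.Ioc a b) := hv2.mono_set Set.Ioc_subset_Icc_self
  rw [integral_of_le hab, integral_of_le hab]
  calc ∫ r in Set.Ioc a b, |η (r / ε - c)| * |p r| * |v r| * |j r|
      ≤ ∫ r in Set.Ioc a b, C * P * (|η (r / ε - c)| * |v r|) := by
        refine integral_mono_of_nonneg (ae_of_all _ fun r => by positivity)
          ((integrable_abs_mul_abs_of_integrable_sq
            (by fun_prop : Measurable fun r => η (r / ε - c)).aestronglyMeasurable
            hv.aestronglyMeasurable
            ((hη2.comp_sub_right c).comp_div hε.ne').integrableOn hv2').const_mul _) ?_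
        refine (ae_restrict_iff' measurableSet_Ioc).2 (ae_of_all _ fun r hr => ?_)
        have hrI : r ∈ Set.Icc a b := Set.Ioc_subset_Icc_self hr
        calc |η (r / ε - c)| * |p r| * |v r| * |j r|
            ≤ |η (r / ε - c)| * P * |v r| * C := by
              gcongr; exacts [hp r hrI, hj r hrI]
          _ = C * P * (|η (r / ε - c)| * |v r|) := by ring
    _ = C * P * ∫ r in Set.Ioc a b, |η (r / ε - c)| * |v r| := integral_const_mul _ _
    _ ≤ C * P *
          (Real.sqrt ε * Real.sqrt (∫ ρ, η ρ ^ 2) * Real.sqrt (∫ r in Set.Ioc a b, v r ^ 2)) :=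
        mul_le_mul_of_nonneg_left (setIntegral_abs_comp_div_sub_mul_abs_le hη hη2 hε c
          hv.aestronglyMeasurable hv2') (by positivity)

-- Coordinates `(r, s) ∈ [-2δ, 2δ] × 𝕋¹` on `Γ_t(2δ)`, `J` the Jacobian of the coordinate map, and
-- `Ψ` a fibrewise bound of `|ψ|`, so that `‖Ψ‖_{L²(𝕋¹)}` plays the role of `‖ψ‖_{L^{2,∞}}`.
theorem stmt_13_general (δ ε CJ : ℝ) (hδ : 0 < δ) (hε : ε ∈ Set.Ioo (0 : ℝ) 1)
    (η : ℝ → ℝ) (hηmeas : Measurable η) (hη : Integrable (fun ρ => (η ρ) ^ 2))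
    (h : AddCircle (1 : ℝ) → ℝ)
    (J : ℝ → AddCircle (1 : ℝ) → ℝ)
    (hJ : ∀ r s, |J r s| ≤ CJ)
    (ψ : ℝ → AddCircle (1 : ℝ) → ℝ)
    (Ψ : AddCircle (1 : ℝ) → ℝ) (hΨ : Integrable (fun s => (Ψ s) ^ 2))
    (hψΨ : ∀ r ∈ Set.Icc (-(2 * δ)) (2 * δ), ∀ s, |ψ r s| ≤ Ψ s)
    (u : ℝ → AddCircle (1 : ℝ) → ℝ)
    (humeas : Measurable (Function.uncurry u))
    (hu : ∀ s : AddCircle (1 : ℝ), IntegrableOn (fun r => (u r s) ^ 2)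
      (Set.Icc (-(2 * δ)) (2 * δ)))
    (huL2 : Integrable (fun s : AddCircle (1 : ℝ) =>
      ∫ r in (-(2 * δ))..(2 * δ), (u r s) ^ 2)) :
    (∫ s : AddCircle (1 : ℝ), ∫ r in (-(2 * δ))..(2 * δ),
        |η (r / ε - h s)| * |ψ r s| * |u r s| * |J r s|)
      ≤ CJ * Real.sqrt ε * Real.sqrt (∫ ρ : ℝ, (η ρ) ^ 2)
          * Real.sqrt (∫ s : AddCircle (1 : ℝ), (Ψ s) ^ 2)
          * Real.sqrt (∫ s : AddCircle (1 : ℝ), ∫ r in (-(2 * δ))..(2 * δ), (u r s) ^ 2) := by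
  have hab : -(2 * δ) ≤ 2 * δ := by linarith
  have hCJ : 0 ≤ CJ := (abs_nonneg _).trans (hJ 0 0)
  have hΨ0 (s) : 0 ≤ Ψ s := (abs_nonneg _).trans (hψΨ 0 ⟨by linarith, by linarith⟩ s)
  set U := fun s => ∫ r in (-(2 * δ))..(2 * δ), u r s ^ 2
  have hU0 (s) : 0 ≤ U s := integral_nonneg hab fun r _ => sq_nonneg _
  have hΨm : AEStronglyMeasurable Ψ := (Real.continuous_sqrt.comp_aestronglyMeasurable hΨ.1).congr
    (ae_of_all _ fun s => Real.sqrt_sq (hΨ0 s))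
  have hBm : AEStronglyMeasurable fun s => Real.sqrt (U s) :=
    Real.continuous_sqrt.comp_aestronglyMeasurable huL2.1
  have hB2 : Integrable fun s => Real.sqrt (U s) ^ 2 := by
    simpa only [Real.sq_sqrt (hU0 _)] using huL2
  set K := CJ * Real.sqrt ε * Real.sqrt (∫ ρ : ℝ, (η ρ) ^ 2)
  calc (∫ s, ∫ r in (-(2 * δ))..(2 * δ), |η (r / ε - h s)| * |ψ r s| * |u r s| * |J r s|)
      ≤ ∫ s, K * (|Ψ s| * |Real.sqrt (U s)|) := by
        refine integral_mono_of_nonneg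
          (ae_of_all _ fun s => integral_nonneg hab fun r _ => by positivity)
          ((integrable_abs_mul_abs_of_integrable_sq hΨm hBm hΨ hB2).const_mul K)
          (ae_of_all _ fun s => ?_)
        refine (intervalIntegral_abs_comp_div_sub_mul_le (v := fun r => u r s) hab hε.1 hηmeas hη
          (fun r hr => hψΨ r hr s) (fun r _ => hJ r s) (humeas.comp measurable_prodMk_right)
          (hu s)).trans_eq ?_
        simp only [abs_of_nonneg (hΨ0 s), abs_of_nonneg (Real.sqrt_nonneg _), K, U]
        ring
    _ = K * ∫ s, |Ψ s| * |Real.sqrt (U s)| := integral_const_mul _ _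
    _ ≤ K * (Real.sqrt (∫ s, Ψ s ^ 2) * Real.sqrt (∫ s, Real.sqrt (U s) ^ 2)) := by
        gcongr
        exact integral_abs_mul_abs_le_sqrt_mul_sqrt hΨm hBm hΨ hB2
    _ = _ := by simp only [Real.sq_sqrt (hU0 _), K, U]; ring

/-- Lemma 2.4.2 (in tubular-neighborhood coordinates `(r,s) ∈ (-2δ,2δ) × 𝕋¹` with Jacobian
bounded by `CJ`): `‖η(d_Γ/ε − h(S)) ψ u‖_{L¹(Γ_t(2δ))} ≤
C ε^{1/2} ‖η‖_{L²(ℝ)} ‖ψ‖_{L^{2,∞}(Γ_t(2δ))} ‖u‖_{L²(Γ_t(2δ))}`,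
where `Ψ(s) = ess sup_{|r|≤2δ} |ψ(X₁(r,s))|` dominates `ψ`. -/
theorem stmt_13 (δ ε CJ : ℝ) (hδ : 0 < δ) (hε : ε ∈ Set.Ioo (0 : ℝ) 1) (hCJ : 0 < CJ)
    (η : ℝ → ℝ) (hηmeas : Measurable η) (hη : Integrable (fun ρ => (η ρ) ^ 2))
    (h : AddCircle (1 : ℝ) → ℝ) (hh : Continuous h)
    (J : ℝ → AddCircle (1 : ℝ) → ℝ)
    (hJmeas : Measurable (Function.uncurry J))
    (hJ : ∀ r s, |J r s| ≤ CJ)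
    (ψ : ℝ → AddCircle (1 : ℝ) → ℝ)
    (hψmeas : Measurable (Function.uncurry ψ))
    (Ψ : AddCircle (1 : ℝ) → ℝ) (hΨ : Integrable (fun s => (Ψ s) ^ 2)) (hΨ0 : ∀ s, 0 ≤ Ψ s)
    (hψΨ : ∀ r ∈ Set.Icc (-(2 * δ)) (2 * δ), ∀ s, |ψ r s| ≤ Ψ s)
    (u : ℝ → AddCircle (1 : ℝ) → ℝ)
    (humeas : Measurable (Function.uncurry u))
    (hu : ∀ s : AddCircle (1 : ℝ), IntegrableOn (fun r => (u r s) ^ 2)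
      (Set.Icc (-(2 * δ)) (2 * δ)))
    (huL2 : Integrable (fun s : AddCircle (1 : ℝ) =>
      ∫ r in (-(2 * δ))..(2 * δ), (u r s) ^ 2)) :
    (∫ s : AddCircle (1 : ℝ), ∫ r in (-(2 * δ))..(2 * δ),
        |η (r / ε - h s)| * |ψ r s| * |u r s| * |J r s|)
      ≤ CJ * Real.sqrt ε * Real.sqrt (∫ ρ : ℝ, (η ρ) ^ 2)
          * Real.sqrt (∫ s : AddCircle (1 : ℝ), (Ψ s) ^ 2)
          * Real.sqrt (∫ s : AddCircle (1 : ℝ), ∫ r in (-(2 * δ))..(2 * δ), (u r s) ^ 2) :=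
  stmt_13_general δ ε CJ hδ hε η hηmeas hη h J hJ ψ Ψ hΨ hψΨ u humeas hu huL2
end
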